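/- arXiv:2308.00299 — 2 statements merged into one kernel-verified Lean document; each statement's English description precedes it below -/
import Mathlib

section
/- Every full normal κ-Aronszajn tree is rigid on every club, i.e., for every club D ⊆ κ, every automorphism of the restricted tree (T↾D, <_T) is the identity. -/
open Cardinal Ordinal Set

noncomputable section

open scoped Classical in
/-- The height of a node in a tree-like partial order: the order type of its set
of strict predecessors (0 if that set happens not to be well-ordered). -/
def heightIn {α : Type} [PartialOrder α] (x : α) : Ordinal :=
  if h : IsWellOrder {y // y ∈ {y : α | y < x}} (Subrel (· < ·) {y : α | y < x}) then
    @Ordinal.type _ _ h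
  else 0

/-- `(α, <)` is a `κ`-tree: predecessors are well-ordered, every level below `κ`
is nonempty of size `< κ`, and the `κ`-th level is empty (all heights are `< κ`). -/
structure IsKTree (κ : Cardinal) (α : Type) [PartialOrder α] : Prop where
  wo : ∀ x : α, IsWellOrder {y // y ∈ {y : α | y < x}} (Subrel (· < ·) {y : α | y < x})
  height_lt : ∀ x : α, heightIn x < κ.ord
  level_ne : ∀ o < κ.ord, ∃ x : α, heightIn x = o
  level_small : ∀ o < κ.ord, #{x : α | heightIn x = o} < κ

/-- An `o`-branch: a chain whose set of heights is exactly `{β | β < o}`. -/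
def IsBranch {α : Type} [PartialOrder α] (B : Set α) (o : Ordinal) : Prop :=
  IsChain (· < ·) B ∧ heightIn '' B = Set.Iio o

/-- A vanishing branch: one with no upper bound in the tree. -/
def Vanishing {α : Type} [PartialOrder α] (B : Set α) : Prop :=
  ¬ ∃ y : α, ∀ x ∈ B, x ≤ y

/-- A `κ`-tree is full iff for every limit `o < κ` there is at most one
vanishing `o`-branch. -/
def IsFull (κ : Cardinal) (α : Type) [PartialOrder α] : Prop :=
  ∀ o : Ordinal, Order.IsSuccLimit o → o < κ.ord →
    ∀ B₁ B₂ : Set α, IsBranch B₁ o → Vanishing B₁ → IsBranch B₂ o → Vanishing B₂ → B₁ = B₂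

/-- A `κ`-branch: a chain meeting every level below `κ`. -/
def IsKBranch (κ : Cardinal) {α : Type} [PartialOrder α] (B : Set α) : Prop :=
  IsChain (· < ·) B ∧ ∀ o < κ.ord, ∃ x ∈ B, heightIn x = o

/-- `κ`-Aronszajn: a `κ`-tree with no `κ`-branch. -/
def IsAronszajn (κ : Cardinal) (α : Type) [PartialOrder α] : Prop :=
  ¬ ∃ B : Set α, IsKBranch κ B

/-- Normality: every node has extensions at every higher level below `κ`. -/
def IsNormalTree (κ : Cardinal) (α : Type) [PartialOrder α] : Prop :=
  ∀ x : α, ∀ o : Ordinal, heightIn x < o → o < κ.ord → ∃ y : α, x < y ∧ heightIn y = o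

/-- `D` is a club (closed unbounded set) in the ordinal `o`. -/
def IsClubIn (D : Set Ordinal) (o : Ordinal) : Prop :=
  D ⊆ Set.Iio o ∧ (∀ a < o, ∃ b ∈ D, a ≤ b) ∧
    ∀ a < o, (D ∩ Set.Iio a).Nonempty → sSup (D ∩ Set.Iio a) = a → a ∈ D

/-- `S` is stationary in the ordinal `o`. -/
def StatIn (S : Set Ordinal) (o : Ordinal) : Prop :=
  ∀ D : Set Ordinal, IsClubIn D o → (S ∩ D).Nonempty

section auxlemmas

variable {α : Type} [PartialOrder α]
  (hwo : ∀ x : α, IsWellOrder {y // y ∈ {y : α | y < x}} (Subrel (· < ·) {y : α | y < x}))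

omit hwo in
theorem heightIn_def (x : α) (h : IsWellOrder {y // y ∈ {y : α | y < x}} (Subrel (· < ·) {y : α | y < x})) :
    heightIn x = @Ordinal.type _ _ h := dif_pos h

omit hwo in
theorem heightIn_pred {x y : α} (hx : x < y)
    (hwx : IsWellOrder {z // z ∈ {z : α | z < x}} (Subrel (· < ·) {z : α | z < x}))
    (hwy : IsWellOrder {z // z ∈ {z : α | z < y}} (Subrel (· < ·) {z : α | z < y})) :
    heightIn x = @Ordinal.typein _ (Subrel (· < ·) {z : α | z < y}) hwy ⟨x, hx⟩ := by
  rw [heightIn_def x hwx, ← @Ordinal.type_subrel _ _ hwy ⟨x, hx⟩]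
  refine (@Ordinal.type_eq _ _ _ _ hwx _).2 ⟨?_⟩
  exact ⟨⟨fun z => ⟨⟨z.1, lt_trans z.2 hx⟩, z.2⟩, fun b => ⟨b.1.1, b.2⟩,
    fun z => rfl, fun b => rfl⟩, Iff.rfl⟩

include hwo

theorem heightIn_lt_of_lt {x y : α} (h : x < y) : heightIn x < heightIn y := by
  rw [heightIn_pred h (hwo x) (hwo y), heightIn_def y (hwo y)]
  exact @Ordinal.typein_lt_type _ _ (hwo y) _

theorem heightIn_le_of_le {x y : α} (h : x ≤ y) : heightIn x ≤ heightIn y := by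
  rcases h.lt_or_eq with h | rfl
  · exact (heightIn_lt_of_lt hwo h).le
  · exact le_rfl

theorem exists_pred_at {y : α} {β : Ordinal} (hβ : β < heightIn y) :
    ∃ x, x < y ∧ heightIn x = β := by
  rw [heightIn_def y (hwo y)] at hβ
  obtain ⟨⟨x, hx⟩, hx'⟩ := @Ordinal.typein_surj _ _ (hwo y) _ hβ
  exact ⟨x, hx, (heightIn_pred hx (hwo x) (hwo y)).trans hx'⟩

theorem pred_trichot {y z₁ z₂ : α} (h₁ : z₁ < y) (h₂ : z₂ < y) :
    z₁ < z₂ ∨ z₁ = z₂ ∨ z₂ < z₁ := by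
  rcases @trichotomous _ _ (hwo y).toTrichotomous ⟨z₁, h₁⟩ ⟨z₂, h₂⟩ with h | h | h
  · exact Or.inl h
  · exact Or.inr (Or.inl (congrArg Subtype.val h))
  · exact Or.inr (Or.inr h)

/-- The predecessors (within the restricted tree) of a node `a` are well-ordered. -/
theorem subS_wo {D : Set Ordinal} (a : α) :
    IsWellOrder {b // b ∈ {b : {x : α // heightIn x ∈ D} | b.1 < a}}
      (Subrel (· < ·) {b : {x : α // heightIn x ∈ D} | b.1 < a}) := by
  haveI := hwo a
  exact @RelEmbedding.isWellOrder _ _ _ _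
    (⟨⟨fun b => (⟨b.1.1, b.2⟩ : {z // z ∈ {z : α | z < a}}),
      fun b₁ b₂ h => by
        have h2 : (b₁.1.1 : α) = b₂.1.1 :=
          congrArg (Subtype.val : {z // z ∈ {z : α | z < a}} → α) h
        exact Subtype.ext (Subtype.ext h2)⟩,
      fun {b₁ b₂} => Iff.symm Subtype.coe_lt_coe⟩ :
      Subrel (· < ·) {b : {x : α // heightIn x ∈ D} | b.1 < a} ↪r
        Subrel (· < ·) {z : α | z < a}) (hwo a)

/-- The order type of restricted-tree predecessors of `a` equals the order type
of `D ∩ Iio (heightIn a)`. -/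
theorem restricted_type_eq {D : Set Ordinal} (a : α) :
    Ordinal.lift.{1} (@Ordinal.type _ _ (subS_wo hwo (D := D) a))
      = Ordinal.lift.{0}
        (Ordinal.type (Subrel ((· < ·) : Ordinal → Ordinal → Prop) (· ∈ D ∩ Set.Iio (heightIn a)))) := by
  refine @RelIso.ordinal_lift_type_eq _ _ _ _ (subS_wo hwo a) _ ?_
  have hmap : ∀ b : {b // b ∈ {b : {x : α // heightIn x ∈ D} | b.1 < a}},
      heightIn (b.1.1 : α) ∈ D ∩ Set.Iio (heightIn a) :=
    fun b => ⟨b.1.2, heightIn_lt_of_lt hwo b.2⟩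
  refine ⟨Equiv.ofBijective (fun b => ⟨heightIn b.1.1, hmap b⟩) ⟨?_, ?_⟩, ?_⟩
  · intro b₁ b₂ h
    have hh : heightIn (b₁.1.1 : α) = heightIn (b₂.1.1 : α) := congrArg Subtype.val h
    have : b₁.1.1 = b₂.1.1 := by
      rcases pred_trichot hwo b₁.2 b₂.2 with h' | h' | h'
      · exact absurd hh (ne_of_lt (heightIn_lt_of_lt hwo h'))
      · exact h'
      · exact absurd hh.symm (ne_of_lt (heightIn_lt_of_lt hwo h'))
    exact Subtype.ext (Subtype.ext this)
  · rintro ⟨β, hβD, hβlt⟩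
    obtain ⟨x, hxa, hx⟩ := exists_pred_at hwo hβlt
    exact ⟨⟨⟨x, by rw [hx]; exact hβD⟩, hxa⟩, Subtype.ext hx⟩
  · intro b₁ b₂
    show heightIn (b₁.1.1 : α) < heightIn (b₂.1.1 : α) ↔ _
    constructor
    · intro h
      rcases pred_trichot hwo b₁.2 b₂.2 with h' | h' | h'
      · exact h'
      · exact absurd (congrArg heightIn h') (ne_of_lt h)
      · exact absurd (heightIn_lt_of_lt hwo h') (asymm h)
    · exact fun h => heightIn_lt_of_lt hwo h

omit hwo in
theorem otype_inter_lt {D : Set Ordinal} {β γ : Ordinal} (hβ : β ∈ D) (h : β < γ) :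
    Ordinal.type (Subrel ((· < ·) : Ordinal → Ordinal → Prop) (· ∈ D ∩ Set.Iio β))
      < Ordinal.type (Subrel ((· < ·) : Ordinal → Ordinal → Prop) (· ∈ D ∩ Set.Iio γ)) := by
  have key : Ordinal.type (Subrel ((· < ·) : Ordinal → Ordinal → Prop) (· ∈ D ∩ Set.Iio β))
      = Ordinal.typein (Subrel ((· < ·) : Ordinal → Ordinal → Prop) (· ∈ D ∩ Set.Iio γ))
        ⟨β, hβ, h⟩ := by
    rw [← Ordinal.type_subrel]
    refine Ordinal.type_eq.2 ⟨?_⟩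
    exact ⟨⟨fun z => ⟨⟨z.1, z.2.1, lt_trans z.2.2 h⟩, z.2.2⟩,
      fun b => ⟨b.1.1, b.1.2.1, b.2⟩, fun z => rfl, fun b => rfl⟩, Iff.rfl⟩
  rw [key]; exact Ordinal.typein_lt_type _ _

omit hwo in
theorem otype_inter_inj {D : Set Ordinal} {β γ : Ordinal} (hβ : β ∈ D) (hγ : γ ∈ D)
    (h : Ordinal.type (Subrel ((· < ·) : Ordinal → Ordinal → Prop) (· ∈ D ∩ Set.Iio β))
      = Ordinal.type (Subrel ((· < ·) : Ordinal → Ordinal → Prop) (· ∈ D ∩ Set.Iio γ))) :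
    β = γ := by
  rcases lt_trichotomy β γ with hl | he | hl
  · exact absurd h (ne_of_lt (otype_inter_lt hβ hl))
  · exact he
  · exact absurd h.symm (ne_of_lt (otype_inter_lt hγ hl))

/-- An order automorphism of the restricted tree preserves (full-tree) heights. -/
theorem heightIn_pi_eq {D : Set Ordinal}
    (π : {x : α // heightIn x ∈ D} ≃ {x : α // heightIn x ∈ D})
    (hπ : ∀ a b : {x : α // heightIn x ∈ D}, a.1 < b.1 ↔ (π a).1 < (π b).1)
    (a : {x : α // heightIn x ∈ D}) : heightIn (π a).1 = heightIn a.1 := by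
  refine otype_inter_inj (π a).2 a.2 ?_
  refine Ordinal.lift_inj.1 ?_
  rw [← restricted_type_eq hwo (D := D) (π a).1, ← restricted_type_eq hwo (D := D) a.1]
  refine congrArg _ ?_
  refine ((@Ordinal.type_eq _ _ _ _ (subS_wo hwo a.1) (subS_wo hwo (π a).1)).2 ⟨?_⟩).symm
  refine ⟨⟨fun b => ⟨π b.1, (hπ b.1 a).1 b.2⟩,
    fun c => ⟨π.symm c.1, by
      have h := (hπ (π.symm c.1) a).2
      rw [Equiv.apply_symm_apply] at h
      exact h c.2⟩,
    fun b => Subtype.ext (Equiv.symm_apply_apply π b.1),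
    fun c => Subtype.ext (Equiv.apply_symm_apply π c.1)⟩, ?_⟩
  intro b₁ b₂
  constructor
  · intro h
    exact Subtype.coe_lt_coe.1 ((hπ b₁.1 b₂.1).2 (Subtype.coe_lt_coe.2 h))
  · intro h
    exact Subtype.coe_lt_coe.1 ((hπ b₁.1 b₂.1).1 (Subtype.coe_lt_coe.2 h))

end auxlemmas

/-- Every maximal chain in the club-restricted tree of a full normal Aronszajn
tree has limit supremum of heights which lies in `D`, and its downward closure
in the full tree is a vanishing branch of that height. -/
theorem maxchain_branch {κ : Cardinal} {α : Type} [PartialOrder α]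
    (htree : IsKTree κ α) (hnorm : IsNormalTree κ α) (haron : IsAronszajn κ α)
    (hord : Order.IsSuccLimit κ.ord) {D : Set Ordinal} (hD : IsClubIn D κ.ord)
    (B : Set {x : α // heightIn x ∈ D})
    (hmax : IsMaxChain (· < ·) B) (hne : B.Nonempty) :
    Order.IsSuccLimit (sSup ((fun b : {x : α // heightIn x ∈ D} => heightIn b.1) '' B)) ∧
      sSup ((fun b : {x : α // heightIn x ∈ D} => heightIn b.1) '' B) < κ.ord ∧
      sSup ((fun b : {x : α // heightIn x ∈ D} => heightIn b.1) '' B) ∈ D ∧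
      IsBranch {z : α | ∃ b ∈ B, z ≤ b.1}
        (sSup ((fun b : {x : α // heightIn x ∈ D} => heightIn b.1) '' B)) ∧
      Vanishing {z : α | ∃ b ∈ B, z ≤ b.1} := by
  have hwo := htree.wo
  obtain ⟨b₀, hb₀⟩ := hne
  have hneB : B.Nonempty := ⟨b₀, hb₀⟩
  -- B has no maximum
  have hnomax : ∀ m ∈ B, ∃ b ∈ B, m < b := by
    intro m hm
    by_contra hcon
    push_neg at hcon
    have hbm : ∀ b ∈ B, b ≤ m := by
      intro b hb
      rcases eq_or_ne b m with rfl | hbm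
      · exact le_rfl
      · rcases hmax.1 hb hm hbm with h | h
        · exact h.le
        · exact absurd h (hcon b hb)
    obtain ⟨γ, hγD, hγ⟩ := hD.2.1 (Order.succ (heightIn m.1)) (hord.succ_lt (htree.height_lt m.1))
    have hγκ : γ < κ.ord := hD.1 hγD
    obtain ⟨y, hmy, hy⟩ := hnorm m.1 γ (lt_of_lt_of_le (Order.lt_succ _) hγ) hγκ
    have hmz : ∀ b ∈ B, b < (⟨y, by rw [hy]; exact hγD⟩ : {x : α // heightIn x ∈ D}) :=
      fun b hb => Subtype.coe_lt_coe.1 (lt_of_le_of_lt (Subtype.coe_le_coe.2 (hbm b hb)) hmy)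
    have hchain : IsChain (· < ·) (insert (⟨y, by rw [hy]; exact hγD⟩ :
        {x : α // heightIn x ∈ D}) B) :=
      hmax.1.insert fun c hc _ => Or.inr (hmz c hc)
    have hzB : (⟨y, by rw [hy]; exact hγD⟩ : {x : α // heightIn x ∈ D}) ∈ B := by
      rw [hmax.2 hchain (Set.subset_insert _ B)]; exact Set.mem_insert _ B
    exact absurd (hmz _ hzB) (lt_irrefl _)
  set o := sSup ((fun b : {x : α // heightIn x ∈ D} => heightIn b.1) '' B) with ho
  have hbdd : BddAbove ((fun b : {x : α // heightIn x ∈ D} => heightIn b.1) '' B) :=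
    ⟨κ.ord, by rintro β ⟨b, hb, rfl⟩; exact (htree.height_lt b.1).le⟩
  have hltB : ∀ b ∈ B, heightIn b.1 < o := by
    intro b hb
    obtain ⟨c, hc, hbc⟩ := hnomax b hb
    exact lt_of_lt_of_le (heightIn_lt_of_lt hwo (Subtype.coe_lt_coe.2 hbc))
      (le_csSup hbdd ⟨c, hc, rfl⟩)
  have hcof : ∀ β < o, ∃ b ∈ B, β < heightIn b.1 := by
    intro β hβ
    obtain ⟨_, ⟨b, hb, rfl⟩, h⟩ := exists_lt_of_lt_csSup (hneB.image _) hβ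
    exact ⟨b, hb, h⟩
  -- the downward closure of B is a chain
  have hclchain : IsChain (· < ·) {z : α | ∃ b ∈ B, z ≤ b.1} := by
    rintro z₁ ⟨c₁, hc₁, h₁⟩ z₂ ⟨c₂, hc₂, h₂⟩ hne2
    obtain ⟨c, hz₁, hz₂⟩ : ∃ c : α, z₁ ≤ c ∧ z₂ ≤ c := by
      rcases eq_or_ne c₁ c₂ with rfl | hcne
      · exact ⟨c₁.1, h₁, h₂⟩
      · rcases hmax.1 hc₁ hc₂ hcne with h | h
        · exact ⟨c₂.1, le_trans h₁ (Subtype.coe_le_coe.2 h.le), h₂⟩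
        · exact ⟨c₁.1, h₁, le_trans h₂ (Subtype.coe_le_coe.2 h.le)⟩
    have tri : z₁ < z₂ ∨ z₁ = z₂ ∨ z₂ < z₁ := by
      rcases hz₁.lt_or_eq with hu' | rfl
      · rcases hz₂.lt_or_eq with hv' | rfl
        · exact pred_trichot hwo hu' hv'
        · exact Or.inl hu'
      · rcases hz₂.lt_or_eq with hv' | rfl
        · exact Or.inr (Or.inr hv')
        · exact Or.inr (Or.inl rfl)
    rcases tri with h | h | h
    · exact Or.inl h
    · exact absurd h hne2
    · exact Or.inr h
  -- closure meets every level below o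
  have hlev : ∀ β < o, ∃ z ∈ {z : α | ∃ b ∈ B, z ≤ b.1}, heightIn z = β := by
    intro β hβ
    obtain ⟨b, hb, hβb⟩ := hcof β hβ
    obtain ⟨x, hxb, hx⟩ := exists_pred_at hwo hβb
    exact ⟨x, ⟨b, hb, hxb.le⟩, hx⟩
  have hoκ : o < κ.ord := by
    by_contra hcon
    push_neg at hcon
    exact haron ⟨{z : α | ∃ b ∈ B, z ≤ b.1}, hclchain,
      fun β hβ => hlev β (lt_of_lt_of_le hβ hcon)⟩
  have holim : Order.IsSuccLimit o := by
    refine Ordinal.isSuccLimit_iff.2 ⟨?_, Order.isSuccPrelimit_of_succ_lt ?_⟩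
    · intro h0
      have h1 := hltB b₀ hb₀
      rw [h0] at h1
      exact absurd h1 zero_le.not_gt
    · intro β hβ
      obtain ⟨b, hb, hβb⟩ := hcof β hβ
      exact lt_of_le_of_lt (Order.succ_le_of_lt hβb) (hltB b hb)
  have hne1 : (D ∩ Set.Iio o).Nonempty := ⟨heightIn b₀.1, b₀.2, hltB b₀ hb₀⟩
  have hsup2 : sSup (D ∩ Set.Iio o) = o := by
    have hb1 : BddAbove (D ∩ Set.Iio o) := ⟨o, fun β hβ => hβ.2.le⟩
    refine le_antisymm (csSup_le hne1 fun β hβ => hβ.2.le) ?_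
    by_contra hcon
    push_neg at hcon
    obtain ⟨b, hb, hβb⟩ := hcof _ hcon
    exact absurd (le_csSup hb1 ⟨b.2, hltB b hb⟩) (not_le.2 hβb)
  have hoD : o ∈ D := hD.2.2 o hoκ hne1 hsup2
  have hbr : IsBranch {z : α | ∃ b ∈ B, z ≤ b.1} o := by
    refine ⟨hclchain, ?_⟩
    ext β
    constructor
    · rintro ⟨z, ⟨b, hb, hzb⟩, rfl⟩
      exact lt_of_le_of_lt (heightIn_le_of_le hwo hzb) (hltB b hb)
    · intro hβ
      obtain ⟨z, hz, hz'⟩ := hlev β hβ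
      exact ⟨z, hz, hz'⟩
  have hvan : Vanishing {z : α | ∃ b ∈ B, z ≤ b.1} := by
    rintro ⟨y, hy⟩
    have hby : ∀ b ∈ B, b.1 < y := by
      intro b hb
      rcases (hy b.1 ⟨b, hb, le_rfl⟩).lt_or_eq with h | h
      · exact h
      · exfalso
        obtain ⟨c, hc, hbc⟩ := hnomax b hb
        have hcy : c.1 ≤ y := hy c.1 ⟨c, hc, le_rfl⟩
        rw [← h] at hcy
        exact absurd (Subtype.coe_lt_coe.2 hbc) hcy.not_gt
    have hoy : o ≤ heightIn y :=
      csSup_le (hneB.image _)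
        (by rintro β ⟨b, hb, rfl⟩; exact (heightIn_lt_of_lt hwo (hby b hb)).le)
    obtain ⟨z, hz, hzB⟩ : ∃ z : α, heightIn z = o ∧ ∀ b ∈ B, b.1 < z := by
      rcases hoy.lt_or_eq with h | h
      · obtain ⟨z, hzy, hz⟩ := exists_pred_at hwo h
        refine ⟨z, hz, fun b hb => ?_⟩
        rcases pred_trichot hwo (hby b hb) hzy with h' | h' | h'
        · exact h'
        · exact absurd (hltB b hb) (by rw [h', hz]; exact lt_irrefl o)
        · exact absurd (hltB b hb) (not_lt.2 (le_of_lt (hz ▸ heightIn_lt_of_lt hwo h')))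
      · exact ⟨y, h.symm, hby⟩
    have hzD : heightIn z ∈ D := by rw [hz]; exact hoD
    have hchain : IsChain (· < ·)
        (insert (⟨z, hzD⟩ : {x : α // heightIn x ∈ D}) B) :=
      hmax.1.insert fun c hc _ => Or.inr (Subtype.coe_lt_coe.1 (hzB c hc))
    have hzBmem : (⟨z, hzD⟩ : {x : α // heightIn x ∈ D}) ∈ B := by
      rw [hmax.2 hchain (Set.subset_insert _ B)]; exact Set.mem_insert _ B
    have h3 : heightIn z < o := hltB _ hzBmem
    rw [hz] at h3
    exact lt_irrefl o h3
  exact ⟨holim, hoκ, hoD, hbr, hvan⟩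

/-- Every full normal `κ`-Aronszajn tree is rigid on every club: for every club
`D ⊆ κ`, every automorphism of the tree `T↾D` of nodes with height in `D` is
the identity. -/
theorem full_normal_aronszajn_rigid_on_club
    (κ : Cardinal) (hreg : κ.IsRegular) (hunc : ℵ₀ < κ)
    (α : Type) [PartialOrder α] (htree : IsKTree κ α)
    (hnorm : IsNormalTree κ α) (haron : IsAronszajn κ α) (hfull : IsFull κ α)
    (D : Set Ordinal) (hD : IsClubIn D κ.ord)
    (π : {x : α // heightIn x ∈ D} ≃ {x : α // heightIn x ∈ D})
    (hπ : ∀ a b : {x : α // heightIn x ∈ D}, a.1 < b.1 ↔ (π a).1 < (π b).1) :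
    ∀ a, π a = a := by
  intro a₀
  have hwo := htree.wo
  have hord : Order.IsSuccLimit κ.ord := Cardinal.isSuccLimit_ord hunc.le
  obtain ⟨B, hmax, hsub⟩ := (IsChain.singleton (r := (· < ·)) (a := a₀)).exists_maxChain
  have ha₀B : a₀ ∈ B := hsub rfl
  have hneB : B.Nonempty := ⟨a₀, ha₀B⟩
  have hchain' : IsChain (· < ·) (π '' B) := by
    rintro _ ⟨b₁, hb₁, rfl⟩ _ ⟨b₂, hb₂, rfl⟩ hne2
    have hb12 : b₁ ≠ b₂ := fun h => hne2 (congrArg π h)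
    rcases hmax.1 hb₁ hb₂ hb12 with h | h
    · exact Or.inl (Subtype.coe_lt_coe.1 ((hπ b₁ b₂).1 (Subtype.coe_lt_coe.2 h)))
    · exact Or.inr (Subtype.coe_lt_coe.1 ((hπ b₂ b₁).1 (Subtype.coe_lt_coe.2 h)))
  have hmax' : IsMaxChain (· < ·) (π '' B) := by
    refine ⟨hchain', fun C hC hsubC => ?_⟩
    have hC' : IsChain (· < ·) (π.symm '' C) := by
      rintro _ ⟨c₁, h₁, rfl⟩ _ ⟨c₂, h₂, rfl⟩ hne2
      have hc12 : c₁ ≠ c₂ := fun h => hne2 (congrArg π.symm h)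
      have key : ∀ u v : {x : α // heightIn x ∈ D}, u < v → π.symm u < π.symm v := by
        intro u v huv
        have h := (hπ (π.symm u) (π.symm v)).2
        rw [Equiv.apply_symm_apply, Equiv.apply_symm_apply] at h
        exact Subtype.coe_lt_coe.1 (h (Subtype.coe_lt_coe.2 huv))
      rcases hC h₁ h₂ hc12 with h | h
      · exact Or.inl (key _ _ h)
      · exact Or.inr (key _ _ h)
    have hBsub : B ⊆ π.symm '' C := fun b hb =>
      ⟨π b, hsubC (Set.mem_image_of_mem π hb), Equiv.symm_apply_apply π b⟩
    rw [hmax.2 hC' hBsub, Equiv.image_symm_image]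
  have hht : ∀ a : {x : α // heightIn x ∈ D}, heightIn (π a).1 = heightIn a.1 :=
    heightIn_pi_eq hwo π hπ
  have himg : (fun b : {x : α // heightIn x ∈ D} => heightIn b.1) '' (π '' B)
      = (fun b : {x : α // heightIn x ∈ D} => heightIn b.1) '' B := by
    rw [Set.image_image]
    exact Set.image_congr fun b _ => hht b
  obtain ⟨holim, hoκ, hoD, hbr, hvan⟩ := maxchain_branch htree hnorm haron hord hD B hmax hneB
  obtain ⟨-, -, -, hbr', hvan'⟩ :=
    maxchain_branch htree hnorm haron hord hD (π '' B) hmax' (hneB.image π)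
  rw [himg] at hbr'
  have hBB := hfull _ holim hoκ _ _ hbr hvan hbr' hvan'
  have h1 : a₀.1 ∈ {z : α | ∃ b ∈ B, z ≤ b.1} := ⟨a₀, ha₀B, le_rfl⟩
  have h2 : (π a₀).1 ∈ {z : α | ∃ b ∈ B, z ≤ b.1} := by
    rw [hBB]; exact ⟨π a₀, Set.mem_image_of_mem π ha₀B, le_rfl⟩
  rcases eq_or_ne (π a₀).1 a₀.1 with h | h
  · exact Subtype.ext h
  · exfalso
    rcases hbr.1 h2 h1 h with h' | h'
    · exact absurd (hht a₀) (ne_of_lt (heightIn_lt_of_lt hwo h'))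
    · exact absurd (hht a₀) (ne_of_gt (heightIn_lt_of_lt hwo h'))


end
end

section
/- If ◇*_S(κ-trees) holds for a stationary S ⊆ E^κ_{>ω}, then the set {α ∈ S : cf(|α|) ≠ |α|} is nonstationary in κ. -/
open Cardinal Ordinal Set

noncomputable section

/-- Transfinite sequences of ordinals, represented as functions
`Ordinal → Option Ordinal`; the domain is the set of inputs where the value is
`some`. -/
abbrev TSeq : Type 1 := Ordinal → Option Ordinal

/-- The restriction `f↾β` of a transfinite sequence. -/
def tres (f : TSeq) (β : Ordinal) : TSeq :=
  fun o => if o < β then f o else none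

/-- The `α`-th level of a streamlined tree: its elements with domain exactly
`{o | o < α}`. -/
def tlevel (T : Set TSeq) (α : Ordinal) : Set TSeq :=
  {f ∈ T | ∀ o : Ordinal, f o ≠ none ↔ o < α}

/-- A streamlined `κ`-tree: a downward-closed set of transfinite sequences of
length `< κ` with values in `κ`, all of whose levels below `κ` are nonempty of
size `< κ`. -/
structure IsStreamlined (κ : Cardinal) (T : Set TSeq) : Prop where
  downward : ∀ f ∈ T, ∀ β : Ordinal, tres f β ∈ T
  bounded : ∀ f ∈ T, ∃ α < κ.ord, f ∈ tlevel T α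
  values : ∀ f ∈ T, ∀ o v, f o = some v → v < κ.ord
  level_ne : ∀ α < κ.ord, (tlevel T α).Nonempty
  level_small : ∀ α < κ.ord, #(tlevel T α) < Cardinal.lift.{1} κ

/-- The length-`β` initial segment of a total function `g` on the ordinals,
viewed as a transfinite sequence. -/
def seqOf (g : Ordinal → Ordinal) (β : Ordinal) : TSeq :=
  fun o => if o < β then some (g o) else none

/-- `⟨f_β : β ∈ B⟩` witnesses `◇_{S,B}(κ-trees)`: for every streamlined
`κ`-tree `T`, for stationarily many `α ∈ S`, every `f` in the `α`-th level of
`T` satisfies that `{β ∈ B ∩ α | f↾β = f_β}` is stationary in `α`. -/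
def DiamondTreesWitness (κ : Cardinal) (S B : Set Ordinal) (f_ : Ordinal → TSeq) : Prop :=
  ∀ T : Set TSeq, IsStreamlined κ T →
    StatIn {α ∈ S | ∀ f ∈ tlevel T α,
      StatIn {β | β ∈ B ∧ β < α ∧ tres f β = f_ β} α} κ.ord

/-- `⟨f_β : β ∈ B⟩` witnesses `◇*_{S,B}(κ-trees)`: for every streamlined
`κ`-tree `T` there is a club `D ⊆ κ` such that for every `α ∈ S ∩ D`, every
`f` in the `α`-th level of `T` satisfies that `{β ∈ B ∩ α | f↾β = f_β}` is
stationary in `α`. -/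
def DiamondStarTreesWitness (κ : Cardinal) (S B : Set Ordinal) (f_ : Ordinal → TSeq) : Prop :=
  ∀ T : Set TSeq, IsStreamlined κ T → ∃ D : Set Ordinal, IsClubIn D κ.ord ∧
    ∀ α ∈ S ∩ D, ∀ f ∈ tlevel T α,
      StatIn {β | β ∈ B ∧ β < α ∧ tres f β = f_ β} α

/-! ### Auxiliary construction: the tree of "marker" branches -/

/-- The `ξ`-th branch function: value `0` below `ξ`, and the marker `ξ + 1`
from `ξ` onwards. -/
private def gfun (ξ : Ordinal.{0}) : Ordinal.{0} → Ordinal.{0} := fun o => if o < ξ then 0 else ξ + 1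

/-- The tree of all initial segments of the branch functions `gfun ξ`. -/
private def Tcv (c : Ordinal.{0}) : Set TSeq :=
  {f | ∃ ξ < c, ∃ β < c, f = seqOf (gfun ξ) β}

private lemma tres_seqOf (g : Ordinal.{0} → Ordinal.{0}) (β γ : Ordinal.{0}) :
    tres (seqOf g β) γ = seqOf g (min β γ) := by
  funext o
  simp only [tres, seqOf, lt_min_iff]
  by_cases h1 : o < γ <;> by_cases h2 : o < β <;> simp [h1, h2]

private lemma seqOf_mem_tlevel {T : Set TSeq} {g : Ordinal.{0} → Ordinal.{0}} {β : Ordinal.{0}}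
    (h : seqOf g β ∈ T) : seqOf g β ∈ tlevel T β := by
  refine ⟨h, fun o => ?_⟩
  simp only [seqOf]
  split_ifs with h1 <;> simp [h1]

private lemma tlevel_Tcv {c α : Ordinal.{0}} {f : TSeq} (hf : f ∈ tlevel (Tcv c) α) :
    ∃ ξ ≤ α, f = seqOf (gfun ξ) α := by
  obtain ⟨⟨ξ, hξ, β, hβ, rfl⟩, hdom⟩ := hf
  have h1 : ∀ o, o < β ↔ o < α := fun o => by
    rw [← hdom o]; simp only [seqOf]; split_ifs with h <;> simp [h]
  have hβα : β = α :=
    le_antisymm (le_of_not_gt fun h => lt_irrefl α ((h1 α).1 h))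
      (le_of_not_gt fun h => lt_irrefl β ((h1 β).2 h))
  subst hβα
  rcases le_or_gt ξ β with h | h
  · exact ⟨ξ, h, rfl⟩
  · refine ⟨β, le_rfl, ?_⟩
    funext o
    by_cases h1 : o < β
    · simp [seqOf, gfun, h1, h1.trans h]
    · simp [seqOf, h1]

private lemma isStreamlined_Tcv {κ : Cardinal.{0}} (hκ : ℵ₀ ≤ κ) :
    IsStreamlined κ (Tcv κ.ord) := by
  have hord : Order.IsSuccLimit κ.ord := Cardinal.isSuccLimit_ord hκ
  have h0 : (0 : Ordinal) < κ.ord := hord.pos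
  constructor
  · rintro f ⟨ξ, hξ, β, hβ, rfl⟩ γ
    exact ⟨ξ, hξ, min β γ, (min_le_left β γ).trans_lt hβ, tres_seqOf _ _ _⟩
  · rintro f ⟨ξ, hξ, β, hβ, rfl⟩
    exact ⟨β, hβ, seqOf_mem_tlevel ⟨ξ, hξ, β, hβ, rfl⟩⟩
  · rintro f ⟨ξ, hξ, β, hβ, rfl⟩ o v hv
    rw [seqOf] at hv
    split_ifs at hv with h
    · have hv' : gfun ξ o = v := Option.some.inj hv
      subst hv'
      unfold gfun
      split_ifs
      · exact h0
      · rw [Ordinal.add_one_eq_succ]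
        exact hord.succ_lt hξ
  · intro α hα
    exact ⟨seqOf (gfun 0) α, seqOf_mem_tlevel ⟨0, h0, α, hα, rfl⟩⟩
  · intro α hα
    have key : ∀ f : ↥(tlevel (Tcv κ.ord) α), ∃ ξ ≤ α, (f : TSeq) = seqOf (gfun ξ) α :=
      fun f => tlevel_Tcv f.2
    choose j hj1 hj2 using key
    have hinj : Function.Injective
        (fun f => (⟨j f, Order.lt_succ_iff.2 (hj1 f)⟩ : ↥(Iio (Order.succ α)))) := by
      intro f f' h
      simp only [Subtype.mk.injEq] at h
      apply Subtype.ext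
      rw [hj2 f, hj2 f', show j f = j f' from congrArg Subtype.val h]
    calc #(tlevel (Tcv κ.ord) α) ≤ #(Iio (Order.succ α)) := Cardinal.mk_le_of_injective hinj
      _ = Cardinal.lift.{1} (Order.succ α).card := Ordinal.mk_Iio_ordinal _
      _ < Cardinal.lift.{1} κ := Cardinal.lift_lt.2 (Cardinal.lt_ord.1 (hord.succ_lt hα))

/-- In any ordinal of uncountable cofinality there is a set `C` of size at most
`cof α` all of whose tails `C \ (ξ+1)` are clubs in `α`. -/
private lemma exists_small_club {α : Ordinal.{0}} (hα : ℵ₀ < α.cof) :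
    ∃ C : Set Ordinal, #C ≤ Cardinal.lift.{1} α.cof ∧
      ∀ ξ < α, IsClubIn (C \ Iio (ξ + 1)) α := by
  have hlim : Order.IsSuccLimit α := Ordinal.aleph0_le_cof.1 hα.le
  obtain ⟨ι, f, hlsub, hι⟩ := Ordinal.exists_lsub_cof α
  set X : Set Ordinal := Set.range f with hX
  have hXlt : ∀ x ∈ X, x < α := by
    rintro x ⟨i, rfl⟩; rw [← hlsub]; exact Ordinal.lt_lsub f i
  have hXunb : ∀ a < α, ∃ x ∈ X, a ≤ x := by
    intro a ha
    rw [← hlsub, Ordinal.lt_lsub_iff] at ha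
    obtain ⟨i, hi⟩ := ha
    exact ⟨f i, ⟨i, rfl⟩, hi⟩
  set L : Set Ordinal := {β | β < α ∧ (X ∩ Iio β).Nonempty ∧ sSup (X ∩ Iio β) = β} with hL
  refine ⟨X ∪ L, ?_, ?_⟩
  · -- cardinality bound
    have hXcard : #X ≤ Cardinal.lift.{1} α.cof := by
      rw [← hι]
      simpa using Cardinal.mk_range_le_lift (f := f)
    have hLX : #L ≤ #X := by
      have hmem : ∀ e : ↥L, sInf (X ∩ Ici e.1) ∈ X ∩ Ici e.1 := by
        intro e
        apply csInf_mem
        obtain ⟨x, hx, hax⟩ := hXunb e.1 e.2.1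
        exact ⟨x, hx, hax⟩
      have hmono : ∀ e e' : ↥L, e.1 < e'.1 →
          sInf (X ∩ Ici e.1) < sInf (X ∩ Ici e'.1) := by
        intro e e' hlt
        obtain ⟨he', hne', hsup'⟩ := e'.2
        have hx : ∃ x ∈ X ∩ Iio e'.1, e.1 < x := by
          by_contra hcon
          push_neg at hcon
          have hle : sSup (X ∩ Iio e'.1) ≤ e.1 := csSup_le hne' hcon
          rw [hsup'] at hle
          exact absurd hlt (not_lt.2 hle)
        obtain ⟨x, ⟨hxX, hxlt⟩, hex⟩ := hx
        have h1 : sInf (X ∩ Ici e.1) ≤ x := csInf_le (OrderBot.bddBelow _) ⟨hxX, hex.le⟩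
        have h2 : e'.1 ≤ sInf (X ∩ Ici e'.1) := (hmem e').2
        exact h1.trans_lt (hxlt.trans_le h2)
      have hinj : Function.Injective
          (fun e : ↥L => (⟨sInf (X ∩ Ici e.1), (hmem e).1⟩ : ↥X)) := by
        intro e e' h
        simp only [Subtype.mk.injEq] at h
        rcases lt_trichotomy e.1 e'.1 with hlt | heq | hlt
        · exact absurd h (ne_of_lt (hmono e e' hlt))
        · exact Subtype.ext heq
        · exact absurd h.symm (ne_of_lt (hmono e' e hlt))
      exact Cardinal.mk_le_of_injective hinj
    calc #(X ∪ L : Set Ordinal) ≤ #X + #L := Cardinal.mk_union_le X L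
      _ ≤ Cardinal.lift.{1} α.cof + Cardinal.lift.{1} α.cof :=
          add_le_add hXcard (hLX.trans hXcard)
      _ = Cardinal.lift.{1} α.cof := Cardinal.add_eq_self (Cardinal.aleph0_le_lift.2 hα.le)
  · -- each tail is a club
    intro ξ hξ
    refine ⟨?_, ?_, ?_⟩
    · rintro b ⟨hb, -⟩
      rcases hb with hb | hb
      · exact hXlt b hb
      · exact hb.1
    · intro a ha
      have hξ1 : ξ + 1 < α := by
        rw [Ordinal.add_one_eq_succ]; exact hlim.succ_lt hξ
      obtain ⟨x, hxX, hax⟩ := hXunb (max a (ξ + 1)) (max_lt ha hξ1)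
      exact ⟨x, ⟨Or.inl hxX, not_lt.2 ((le_max_right a (ξ + 1)).trans hax)⟩,
        (le_max_left _ _).trans hax⟩
    · intro a ha hne hsup
      obtain ⟨e, ⟨heC, heξ⟩, hea⟩ := hne
      have hea' : e < a := hea
      have hXa : (X ∩ Iio a).Nonempty := by
        rcases heC with he | he
        · exact ⟨e, he, Set.mem_Iio.2 hea'⟩
        · obtain ⟨x, hx, hxe⟩ := he.2.1
          exact ⟨x, hx, Set.mem_Iio.2 ((Set.mem_Iio.1 hxe).trans hea')⟩
      have hbdd : BddAbove (X ∩ Iio a) := ⟨a, fun x hx => le_of_lt hx.2⟩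
      have hsupa : sSup (X ∩ Iio a) = a := by
        refine le_antisymm (csSup_le hXa fun x hx => le_of_lt hx.2) ?_
        calc a = sSup (((X ∪ L) \ Iio (ξ + 1)) ∩ Iio a) := hsup.symm
          _ ≤ sSup (X ∩ Iio a) := by
            refine csSup_le ⟨e, ⟨⟨heC, heξ⟩, hea⟩⟩ ?_
            rintro b ⟨⟨hbC, -⟩, hba⟩
            rcases hbC with hb | hb
            · exact le_csSup hbdd ⟨hb, hba⟩
            · calc b = sSup (X ∩ Iio b) := hb.2.2.symm
                _ ≤ sSup (X ∩ Iio a) := csSup_le_csSup hbdd hb.2.1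
                    fun x hx => ⟨hx.1, Set.mem_Iio.2 ((Set.mem_Iio.1 hx.2).trans hba)⟩
      refine ⟨Or.inr ⟨ha, hXa, hsupa⟩, fun haξ => ?_⟩
      exact absurd hea' (not_lt.2 ((Set.mem_Iio.1 haξ).trans_le (not_lt.1 heξ)).le)

/-- If `◇*_S(κ-trees)` holds for a stationary `S ⊆ E^κ_{>ω}`, then
`{α ∈ S | cf(|α|) ≠ |α|}` is nonstationary in `κ`. -/
theorem diamond_star_trees_card_regular
    (κ : Cardinal) (hreg : κ.IsRegular) (hunc : ℵ₀ < κ)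
    (S : Set Ordinal)
    (hSsub : S ⊆ {o | o < κ.ord ∧ ℵ₀ < o.cof}) (hSstat : StatIn S κ.ord)
    (f_ : Ordinal → TSeq)
    (hwit : DiamondStarTreesWitness κ S (Set.Iio κ.ord) f_) :
    ¬ StatIn {α ∈ S | (α.card.ord.cof ≠ α.card)} κ.ord := by
  intro hstat
  obtain ⟨D, hD, hguess⟩ := hwit _ (isStreamlined_Tcv hunc.le)
  obtain ⟨α, ⟨hαS, hαne⟩, hαD⟩ := hstat D hD
  obtain ⟨hακ, hαcof⟩ := hSsub hαS
  obtain ⟨C, hCcard, hCclub⟩ := exists_small_club hαcof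
  have hmem : ∀ ξ < α, seqOf (gfun ξ) α ∈ tlevel (Tcv κ.ord) α := fun ξ hξ =>
    seqOf_mem_tlevel ⟨ξ, hξ.trans hακ, α, hακ, rfl⟩
  have hsel : ∀ ξ : ↥(Iio α), ∃ β, β ∈ C ∧ ξ.1 < β ∧ β < α ∧
      tres (seqOf (gfun ξ.1) α) β = f_ β := by
    intro ξ
    have hstatξ := hguess α ⟨hαS, hαD⟩ _ (hmem ξ.1 ξ.2)
    obtain ⟨β, hβG, hβC, hβξ⟩ := hstatξ (C \ Iio (ξ.1 + 1)) (hCclub ξ.1 ξ.2)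
    refine ⟨β, hβC, ?_, hβG.2.1, hβG.2.2⟩
    have h1 : ξ.1 + 1 ≤ β := not_lt.1 hβξ
    calc ξ.1 < ξ.1 + 1 := by
          rw [Ordinal.add_one_eq_succ]; exact Order.lt_succ ξ.1
      _ ≤ β := h1
  choose c hcC hclt hcα hcg using hsel
  have hinj : Function.Injective fun ξ : ↥(Iio α) => (⟨c ξ, hcC ξ⟩ : ↥C) := by
    intro ξ ξ' h
    simp only [Subtype.mk.injEq] at h
    have h1 : tres (seqOf (gfun ξ.1) α) (c ξ') = tres (seqOf (gfun ξ'.1) α) (c ξ') := by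
      rw [← h, hcg ξ, h, hcg ξ']
    rw [tres_seqOf, tres_seqOf, min_eq_right (hcα ξ').le] at h1
    have hm : max ξ.1 ξ'.1 < c ξ' := max_lt (h ▸ hclt ξ) (hclt ξ')
    have h2 := congrFun h1 (max ξ.1 ξ'.1)
    simp only [seqOf, if_pos hm] at h2
    have h3 : gfun ξ.1 (max ξ.1 ξ'.1) = gfun ξ'.1 (max ξ.1 ξ'.1) := Option.some.inj h2
    unfold gfun at h3
    rw [if_neg (not_lt.2 (le_max_left _ _)), if_neg (not_lt.2 (le_max_right _ _))] at h3
    rw [Ordinal.add_one_eq_succ, Ordinal.add_one_eq_succ] at h3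
    exact Subtype.ext (Order.succ_injective h3)
  have hcard : Cardinal.lift.{1} α.card ≤ Cardinal.lift.{1} α.cof := by
    calc Cardinal.lift.{1} α.card = #(Iio α) := (Ordinal.mk_Iio_ordinal α).symm
      _ ≤ #C := Cardinal.mk_le_of_injective hinj
      _ ≤ Cardinal.lift.{1} α.cof := hCcard
  have heq : α.card = α.cof :=
    le_antisymm (Cardinal.lift_le.1 hcard) (Ordinal.cof_le_card α)
  exact hαne (by rw [heq, Ordinal.cof_cof])

end
end
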